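/- arXiv:2109.08606 — 3 statements merged into one kernel-verified Lean document; each statement's English description precedes it below -/
import Mathlib

section
/- Let A be a C*-algebra with a completely full element a ∈ (A₊)₁, let π : A → B(H) be a non-degenerate representation, and let C ⊆ B(H) be a unital C*-algebra commuting with π(A). Suppose there is a net of sequences (v_{j,n})_n in A with Σ_n v_{j,n} v_{j,n}* ≤ 1 and Σ_n v_{j,n} a v_{j,n}* → 1 strictly. Then for every c ∈ C, ‖π(a) c‖ = ‖c‖; i.e., the map c ↦ π(a)c is isometric. -/
/-!
Put `T_j = Σₙ π(v_{j,n}) π(a) π(v_{j,n})*`. Since `c` commutes with `π(A)`,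
`T_j c = c T_j = Σₙ π(v_{j,n}) (π(a) c) π(v_{j,n})*`, and a sum `Σₙ wₙ b wₙ*` with `Σₙ wₙ wₙ* ≤ 1`
has norm at most `‖b‖`: Cauchy–Schwarz in `ℓ²` applied to `⟪η, wₙ b wₙ* ξ⟫ = ⟪wₙ* η, b wₙ* ξ⟫`.
Strict convergence makes `T_j → 1` strongly on the dense span of `π(A) H`, so there
`‖c ξ‖ = lim ‖c T_j ξ‖ ≤ ‖π(a) c‖ ‖ξ‖`.
-/

open scoped ComplexOrder

/-- A positive element `b` of a C*-algebra is *full* if the only closed two-sided ideal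
containing it is the whole algebra. -/
def IsFullElement {A : Type*} [NonUnitalCStarAlgebra A] (b : A) : Prop :=
  ∀ I : TwoSidedIdeal A, IsClosed (I : Set A) → b ∈ I → ∀ x : A, x ∈ I

/-- An element `c` with `0 ≤ c`, `‖c‖ ≤ 1` is *completely full* if `h(c)` is full for every
nonnegative `h ∈ C_0(0,1]` with `h 1 > 0`. -/
def IsCompletelyFull {A : Type*} [NonUnitalCStarAlgebra A] [PartialOrder A]
    [StarOrderedRing A] (c : A) : Prop :=
  0 ≤ c ∧ ‖c‖ ≤ 1 ∧ ∀ h : ℝ → ℝ, Continuous h → h 0 = 0 → (∀ t, 0 ≤ h t) → 0 < h 1 →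
    IsFullElement (cfcₙ h c)

open scoped InnerProductSpace
open Filter Topology

theorem Real.summable_mul_and_tsum_mul_le_of_tsum_sq_le {ι : Type*} {f g : ι → ℝ} {A B : ℝ}
    (hf : ∀ i, 0 ≤ f i) (hg : ∀ i, 0 ≤ g i) (hA : 0 ≤ A) (hB : 0 ≤ B)
    (hf_sum : Summable fun i => f i ^ 2) (hg_sum : Summable fun i => g i ^ 2)
    (hfA : ∑' i, f i ^ 2 ≤ A ^ 2) (hgB : ∑' i, g i ^ 2 ≤ B ^ 2) :
    Summable (fun i => f i * g i) ∧ ∑' i, f i * g i ≤ A * B := by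
  obtain ⟨hfg, hle⟩ := Real.summable_and_inner_le_Lp_mul_Lq_tsum_of_nonneg
    Real.HolderConjugate.two_two hf hg (by simpa [Real.rpow_two] using hf_sum)
    (by simpa [Real.rpow_two] using hg_sum)
  simp only [Real.rpow_two, ← Real.sqrt_eq_rpow] at hle
  refine ⟨hfg, hle.trans ?_⟩
  gcongr
  · exact (Real.sqrt_le_sqrt hfA).trans_eq (Real.sqrt_sq hA)
  · exact (Real.sqrt_le_sqrt hgB).trans_eq (Real.sqrt_sq hB)

namespace ContinuousLinearMap

section Hilbert

variable {𝕜 H : Type*} [RCLike 𝕜] [NormedAddCommGroup H] [InnerProductSpace 𝕜 H]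

theorem opNorm_le_of_inner_le {F : Type*} [NormedAddCommGroup F] [InnerProductSpace 𝕜 F]
    (T : H →L[𝕜] F) {M : ℝ} (hM : 0 ≤ M) (h : ∀ x y, ‖⟪y, T x⟫_𝕜‖ ≤ M * (‖y‖ * ‖x‖)) :
    ‖T‖ ≤ M := by
  refine T.opNorm_le_bound hM fun x => ?_
  obtain h₀ | h₀ := (norm_nonneg (T x)).eq_or_lt
  · rw [← h₀]
    positivity
  · refine le_of_mul_le_mul_left ?_ h₀
    have := h x (T x)
    rw [inner_self_eq_norm_sq_to_K] at this
    simpa [← sq, mul_left_comm] using this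

open RCLike in
theorem re_inner_apply_le_of_le_one {T : H →L[𝕜] H} (hT : T ≤ 1) (ξ : H) :
    re ⟪ξ, T ξ⟫_𝕜 ≤ ‖ξ‖ ^ 2 := by
  have := ((le_def T 1).1 hT).re_inner_nonneg_right ξ
  rw [sub_apply, one_apply_eq_self, inner_sub_right, map_sub, inner_self_eq_norm_sq] at this
  linarith

variable [CompleteSpace H] {w : ℕ → H →L[𝕜] H}

open RCLike in
theorem hasSum_norm_sq_star_apply (hw : Summable fun n => w n * star (w n)) (ξ : H) :
    HasSum (fun n => ‖star (w n) ξ‖ ^ 2) (re ⟪ξ, (∑' n, w n * star (w n)) ξ⟫_𝕜) := by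
  have hterm (n : ℕ) : ‖star (w n) ξ‖ ^ 2 = re ⟪ξ, (w n * star (w n)) ξ⟫_𝕜 := by
    rw [apply_norm_sq_eq_inner_adjoint_right, ← star_eq_adjoint, star_star]
    rfl
  simp only [hterm]
  exact (hw.hasSum.mapL ((innerSL 𝕜 ξ).comp (apply 𝕜 H ξ))).mapL reCLM

theorem summable_norm_sq_star_apply_and_tsum_le (hw : Summable fun n => w n * star (w n))
    (hle : ∑' n, w n * star (w n) ≤ 1) (ξ : H) :
    Summable (fun n => ‖star (w n) ξ‖ ^ 2) ∧ ∑' n, ‖star (w n) ξ‖ ^ 2 ≤ ‖ξ‖ ^ 2 :=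
  have hS := hasSum_norm_sq_star_apply hw ξ
  ⟨hS.summable, hS.tsum_eq ▸ re_inner_apply_le_of_le_one hle ξ⟩

theorem norm_tsum_mul_mul_star_le (hw : Summable fun n => w n * star (w n))
    (hle : ∑' n, w n * star (w n) ≤ 1) {b : H →L[𝕜] H}
    (hb : Summable fun n => w n * b * star (w n)) :
    ‖∑' n, w n * b * star (w n)‖ ≤ ‖b‖ := by
  refine opNorm_le_of_inner_le _ (norm_nonneg b) fun ξ η => ?_
  obtain ⟨hη, hηle⟩ := summable_norm_sq_star_apply_and_tsum_le hw hle η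
  obtain ⟨hξ, hξle⟩ := summable_norm_sq_star_apply_and_tsum_le hw hle ξ
  obtain ⟨hprod, hCS⟩ := Real.summable_mul_and_tsum_mul_le_of_tsum_sq_le
    (fun _ => norm_nonneg _) (fun _ => norm_nonneg _) (norm_nonneg η) (norm_nonneg ξ)
    hη hξ hηle hξle
  have hterm (n : ℕ) : ‖⟪η, (w n * b * star (w n)) ξ⟫_𝕜‖
      ≤ ‖b‖ * (‖star (w n) η‖ * ‖star (w n) ξ‖) := by
    have : ⟪η, (w n * b * star (w n)) ξ⟫_𝕜 = ⟪star (w n) η, b (star (w n) ξ)⟫_𝕜 := by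
      rw [star_eq_adjoint, adjoint_inner_left]
      rfl
    rw [this]
    calc _ ≤ ‖star (w n) η‖ * ‖b (star (w n) ξ)‖ := norm_inner_le_norm _ _
      _ ≤ ‖star (w n) η‖ * (‖b‖ * ‖star (w n) ξ‖) := by gcongr; exact le_opNorm b _
      _ = _ := by ring
  have hnorm : Summable fun n => ‖⟪η, (w n * b * star (w n)) ξ⟫_𝕜‖ :=
    .of_nonneg_of_le (fun _ => norm_nonneg _) hterm (hprod.mul_left _)
  calc ‖⟪η, (∑' n, w n * b * star (w n)) ξ⟫_𝕜‖
      = ‖∑' n, ⟪η, (w n * b * star (w n)) ξ⟫_𝕜‖ := by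
        congr 1
        exact ((hb.hasSum.mapL ((innerSL 𝕜 η).comp (apply 𝕜 H ξ))).tsum_eq).symm
    _ ≤ ∑' n, ‖⟪η, (w n * b * star (w n)) ξ⟫_𝕜‖ := norm_tsum_le_tsum_norm hnorm
    _ ≤ ∑' n, ‖b‖ * (‖star (w n) η‖ * ‖star (w n) ξ‖) :=
        hnorm.tsum_le_tsum hterm (hprod.mul_left _)
    _ ≤ ‖b‖ * (‖η‖ * ‖ξ‖) := by
        rw [tsum_mul_left]
        exact mul_le_mul_of_nonneg_left hCS (norm_nonneg b)

end Hilbert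

section Banach

variable {𝕜 E F J : Type*} [NontriviallyNormedField 𝕜] [NormedAddCommGroup E] [NormedSpace 𝕜 E]
  [NormedAddCommGroup F] [NormedSpace 𝕜 F] {l : Filter J} {T : J → E →L[𝕜] E}

theorem tendsto_apply_of_mem_span {S : Set E}
    (hS : ∀ ξ ∈ S, Tendsto (fun j => T j ξ) l (𝓝 ξ)) {ξ : E} (hξ : ξ ∈ Submodule.span 𝕜 S) :
    Tendsto (fun j => T j ξ) l (𝓝 ξ) := by
  induction hξ using Submodule.span_induction with
  | mem x hx => exact hS x hx
  | zero => simpa using tendsto_const_nhds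
  | add x y _ _ hx hy => simpa using hx.add hy
  | smul r x _ hx => simpa using hx.const_smul r

theorem opNorm_le_of_tendsto_apply_of_dense [l.NeBot] (c : E →L[𝕜] F) {D : Set E} (hD : Dense D)
    (hT : ∀ ξ ∈ D, Tendsto (fun j => T j ξ) l (𝓝 ξ)) {M : ℝ} (hM : 0 ≤ M)
    (hcT : ∀ j, ‖c ∘L T j‖ ≤ M) : ‖c‖ ≤ M := by
  have hbound : ∀ ξ ∈ D, ‖c ξ‖ ≤ M * ‖ξ‖ := fun ξ hξ =>
    le_of_tendsto ((c.continuous.tendsto ξ).comp (hT ξ hξ)).norm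
      (.of_forall fun j => ((c ∘L T j).le_opNorm ξ).trans (by gcongr; exact hcT j))
  exact c.opNorm_le_bound hM <| hD.induction hbound <|
    isClosed_le c.continuous.norm (continuous_const.mul continuous_norm)

end Banach

end ContinuousLinearMap

open ContinuousLinearMap

theorem stmt5_general {A : Type*} [NonUnitalCStarAlgebra A] [PartialOrder A] [StarOrderedRing A]
    {H : Type*} [NormedAddCommGroup H] [InnerProductSpace ℂ H] [CompleteSpace H]
    (a : A) (ha : IsCompletelyFull a)
    (π : A →⋆ₙₐ[ℂ] (H →L[ℂ] H))
    (hπ_nondeg : Dense (Submodule.span ℂ {ξ : H | ∃ (x : A) (η : H), π x η = ξ} : Set H))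
    (C : StarSubalgebra ℂ (H →L[ℂ] H))
    (hC_comm : ∀ x : A, ∀ c ∈ C, Commute (π x) c)
    {J : Type*} [Nonempty J] [SemilatticeSup J]
    (v : J → ℕ → A)
    (hsum : ∀ j, Summable (fun n => π (v j n * a * star (v j n))))
    (hsum' : ∀ j, Summable (fun n => π (v j n * star (v j n))))
    (hle : ∀ j, (∑' n, π (v j n * star (v j n))) ≤ 1)
    (hstrict : ∀ b : A, Filter.Tendsto
      (fun j => ‖(∑' n, π (v j n * a * star (v j n))) * π b - π b‖)
      Filter.atTop (nhds 0)) :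
    ∀ c ∈ C, ‖π a * c‖ = ‖c‖ := by
  intro c hc
  simp only [map_mul, map_star] at hsum hsum' hle hstrict
  set T := fun j => ∑' n, π (v j n) * π a * star (π (v j n))
  have hcomm (x : A) : Commute (π x) c := hC_comm x c hc
  have hcomm_star (x : A) : Commute (star (π x)) c := map_star π x ▸ hcomm (star x)
  have hterm (j : J) (n : ℕ) : π (v j n) * π a * star (π (v j n)) * c
      = π (v j n) * (π a * c) * star (π (v j n)) := by
    rw [mul_assoc, (hcomm_star _).eq, ← mul_assoc, mul_assoc (π (v j n))]
  have hcT (j : J) : c * T j = T j * c := by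
    rw [← (hsum j).tsum_mul_right, ← (hsum j).tsum_mul_left]
    exact tsum_congr fun n => (((hcomm _).mul_left (hcomm a)).mul_left (hcomm_star _)).eq.symm
  have hT_tendsto : ∀ ξ ∈ {ξ : H | ∃ (x : A) (η : H), π x η = ξ},
      Tendsto (fun j => T j ξ) atTop (𝓝 ξ) := by
    rintro _ ⟨x, η, rfl⟩
    exact ((apply ℂ H η).continuous.tendsto (π x)).comp
      (tendsto_iff_norm_sub_tendsto_zero.2 (hstrict x))
  have hπa : ‖π a‖ ≤ 1 := (NonUnitalStarAlgHom.norm_apply_le π a).trans ha.2.1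
  refine le_antisymm ((norm_mul_le _ _).trans (mul_le_of_le_one_left (norm_nonneg c) hπa)) ?_
  refine opNorm_le_of_tendsto_apply_of_dense c hπ_nondeg
    (fun ξ hξ => tendsto_apply_of_mem_span hT_tendsto hξ) (norm_nonneg _) fun j => ?_
  rw [← mul_def, hcT, ← (hsum j).tsum_mul_right, tsum_congr (hterm j)]
  exact norm_tsum_mul_mul_star_le (hsum' j) (hle j) (((hsum j).mul_right c).congr (hterm j))

/-- Let `A` be a C*-algebra with a completely full element `a`, `π : A → B(H)` a
non-degenerate representation, and `C ⊆ B(H)` a unital C*-subalgebra commuting with `π(A)`.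
If there is a net of sequences `(v_{j,n})ₙ` in `A` with `Σₙ v_{j,n} v_{j,n}* ≤ 1` and
`Σₙ v_{j,n} a v_{j,n}* → 1` strictly, then `‖π(a) c‖ = ‖c‖` for every `c ∈ C`. -/
theorem stmt5 {A : Type*} [NonUnitalCStarAlgebra A] [PartialOrder A] [StarOrderedRing A]
    [StarModule ℂ A]
    {H : Type*} [NormedAddCommGroup H] [InnerProductSpace ℂ H] [CompleteSpace H]
    (a : A) (ha : IsCompletelyFull a)
    (π : A →⋆ₙₐ[ℂ] (H →L[ℂ] H))
    (hπ_nondeg : Dense (Submodule.span ℂ {ξ : H | ∃ (x : A) (η : H), π x η = ξ} : Set H))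
    (C : StarSubalgebra ℂ (H →L[ℂ] H)) (hC_closed : IsClosed (C : Set (H →L[ℂ] H)))
    (hC_comm : ∀ x : A, ∀ c ∈ C, Commute (π x) c)
    {J : Type*} [Nonempty J] [SemilatticeSup J]
    (v : J → ℕ → A)
    (hsum : ∀ j, Summable (fun n => π (v j n * a * star (v j n))))
    (hsum' : ∀ j, Summable (fun n => π (v j n * star (v j n))))
    (hle : ∀ j, (∑' n, π (v j n * star (v j n))) ≤ 1)
    (hstrict : ∀ b : A, Filter.Tendsto
      (fun j => ‖(∑' n, π (v j n * a * star (v j n))) * π b - π b‖)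
      Filter.atTop (nhds 0)) :
    ∀ c ∈ C, ‖π a * c‖ = ‖c‖ :=
  stmt5_general a ha π hπ_nondeg C hC_comm v hsum hsum' hle hstrict
end

section
/- Let A be a C*-algebra, a ∈ A₊, C a unital C*-algebra, D a C*-algebra containing both A ⊗ C (or a copy where elements of A and C commute appropriately). Let φ be a bounded positive linear functional on the hereditary subalgebra generated by a inside D, and ω a character on C with φ(a ⊗ c) = φ(a)ω(c) for all c ∈ C. Then φ(c₁ b c₂) = ω(c₁) φ(b) ω(c₂) for all c₁, c₂ ∈ C and b in the hereditary subalgebra generated by a. -/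
open scoped ComplexOrder

/-!
Split `ρ(c) = ρ(c₀) + ω(c)` with `ω(c₀) = 0`; it remains to see that `φ(ρ(c₀) m) = 0 = φ(m ρ(c₀))`
on `Her(a, D)`, and by continuity it is enough to take `m = a d a`. With `r = √a`, `x = r d a` and
`y = r ρ(c₀)*` one has `y* x = ρ(c₀) a d a` and `y* y = a ρ(c₀ c₀*)`, so
`φ(y* y) = φ(a) |ω(c₀)|² = 0`, and the Cauchy–Schwarz inequality for `φ`, which is positive on
`Her(a, D)`, forces `φ(y* x) = 0`. All these products lie in `Her(a, D)` because `ρ(C)` commutes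
with `a` and multiplies `D`, and because `a` itself lies in `Her(a, D)` by functional calculus.
-/

open ComplexConjugate

namespace Complex

theorem eq_zero_of_forall_nonneg_add_ofReal_mul {K γ : ℂ} (h : ∀ t : ℝ, 0 ≤ K + t * γ) :
    γ = 0 := by
  have hre : ∀ t : ℝ, 0 ≤ K.re + t * γ.re := fun t => by simpa using (nonneg_iff.mp (h t)).1
  have him : ∀ t : ℝ, 0 = K.im + t * γ.im := fun t => by simpa using (nonneg_iff.mp (h t)).2
  refine Complex.ext ?_ ?_ <;> simp only [zero_re, zero_im]
  · by_contra hγ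
    have := hre (-(K.re + 1) / γ.re)
    rw [div_mul_cancel₀ _ hγ] at this
    linarith
  · linarith [him 0, him 1]

theorem eq_zero_of_forall_nonneg_add_mul_add_conj_mul {K α β : ℂ}
    (h : ∀ z : ℂ, 0 ≤ K + z * α + conj z * β) : α = 0 ∧ β = 0 := by
  have hsum : α + β = 0 := eq_zero_of_forall_nonneg_add_ofReal_mul fun t =>
    (h t).trans_eq (by rw [conj_ofReal]; ring)
  have hdiff : α - β = 0 := by
    have hI : I * (α - β) = 0 := eq_zero_of_forall_nonneg_add_ofReal_mul (K := K) fun t =>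
      (h (t * I)).trans_eq (by rw [map_mul, conj_ofReal, conj_I]; ring)
    exact (mul_eq_zero.mp hI).resolve_left I_ne_zero
  exact ⟨by linear_combination (hsum + hdiff) / 2, by linear_combination (hsum - hdiff) / 2⟩
end Complex

theorem LinearMap.map_star_mul_eq_zero_of_map_star_mul_self_eq_zero {E : Type*} [NonUnitalRing E]
    [StarRing E] [PartialOrder E] [StarOrderedRing E] [Module ℂ E] [StarModule ℂ E]
    [IsScalarTower ℂ E E] [SMulCommClass ℂ E E] (φ : E →ₗ[ℂ] ℂ) (M : Submodule ℂ E)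
    (hφ : ∀ z ∈ M, 0 ≤ z → 0 ≤ φ z) {x y : E} (hxx : star x * x ∈ M) (hxy : star x * y ∈ M)
    (hyx : star y * x ∈ M) (hyy : star y * y ∈ M) (hy : φ (star y * y) = 0) :
    φ (star x * y) = 0 ∧ φ (star y * x) = 0 := by
  refine Complex.eq_zero_of_forall_nonneg_add_mul_add_conj_mul (K := φ (star x * x)) fun z => ?_
  have hexp : star (x + z • y) * (x + z • y) = star x * x + z • (star x * y) +
      conj z • (star y * x) + (z * conj z) • (star y * y) := by
    simp only [star_add, star_smul, add_mul, mul_add, smul_add, smul_mul_assoc, mul_smul_comm,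
      smul_smul, RCLike.star_def]
    abel
  have hmem : star (x + z • y) * (x + z • y) ∈ M := by
    rw [hexp]
    exact add_mem (add_mem (add_mem hxx (M.smul_mem _ hxy)) (M.smul_mem _ hyx)) (M.smul_mem _ hyy)
  have hpos := hφ _ hmem (star_mul_self_nonneg _)
  rw [hexp] at hpos
  simpa [hy] using hpos

section Hereditary

variable {R E : Type*} [CommRing R] [Ring E] [Algebra R E] [TopologicalSpace E]
  [IsTopologicalRing E] [ContinuousConstSMul R E] {D : NonUnitalSubalgebra R E} {a u m : E}

variable (D a) in
/-- `Her(a, D)`, the closure of `a D a`. -/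
def her : Submodule R E :=
  (D.toSubmodule.map (LinearMap.mulLeftRight R (a, a))).topologicalClosure

variable (D a) in
theorem coe_her : (her D a : Set E) = closure {x | ∃ d ∈ D, x = a * d * a} := by
  rw [her, Submodule.topologicalClosure_coe]
  congr 1
  ext x
  simp [LinearMap.mulLeftRight_apply, eq_comm]

theorem mul_mul_mem_her {d : E} (hd : d ∈ D) : a * d * a ∈ her D a :=
  Submodule.le_topologicalClosure _ ⟨d, hd, rfl⟩

theorem isClosed_her : IsClosed (her D a : Set E) :=
  Submodule.isClosed_topologicalClosure _

theorem her_induction {p : E → Prop} (hp : IsClosed {x | p x}) (h : ∀ d ∈ D, p (a * d * a))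
    (hm : m ∈ her D a) : p m := by
  rw [← SetLike.mem_coe, coe_her] at hm
  exact closure_minimal (by rintro _ ⟨d, hd, rfl⟩; exact h d hd) hp hm

theorem mul_mem_her (hu : Commute a u) (huD : ∀ d ∈ D, u * d ∈ D) (hm : m ∈ her D a) :
    u * m ∈ her D a :=
  her_induction (p := fun x => u * x ∈ her D a) (isClosed_her.preimage (continuous_const_mul u))
    (fun d hd => by
      rw [← mul_assoc, ← mul_assoc, ← hu.eq, mul_assoc a u d]
      exact mul_mul_mem_her (huD d hd))
    hm

theorem mem_her_mul (hu : Commute a u) (huD : ∀ d ∈ D, d * u ∈ D) (hm : m ∈ her D a) :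
    m * u ∈ her D a :=
  her_induction (p := fun x => x * u ∈ her D a) (isClosed_her.preimage (continuous_mul_const u))
    (fun d hd => by
      rw [mul_assoc _ a u, hu.eq, ← mul_assoc, mul_assoc a d u]
      exact mul_mul_mem_her (huD d hd))
    hm

end Hereditary

section CStarAlgebra

variable {E : Type*} [CStarAlgebra E] [PartialOrder E] [StarOrderedRing E]
  {D : NonUnitalStarSubalgebra ℂ E} {a : E}

theorem self_mem_her (hD : IsClosed (D : Set E)) (haD : a ∈ D) (ha : 0 ≤ a) :
    a ∈ her D.toNonUnitalSubalgebra a := by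
  rw [← SetLike.mem_coe, coe_her, Metric.mem_closure_iff]
  intro ε hε
  -- `t * g t * t = t` for `t ≥ ε` and lies in `[0, t]` for `0 ≤ t < ε`
  set g : ℝ → ℝ := fun t => t / max t ε ^ 2
  have hg : Continuous g := continuous_id.div (by fun_prop) fun t => by positivity
  have hg0 : g 0 = 0 := by simp [g]
  refine ⟨a * cfcₙ g a * a, ⟨cfcₙ g a, cfcₙ_mem (s := D) g haD, rfl⟩, ?_⟩
  have hcfc : cfcₙ (fun t => t - t * g t * t) a = a - a * cfcₙ g a * a := by
    rw [cfcₙ_sub (fun t => t) (fun t => t * g t * t) a,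
      cfcₙ_mul (fun t => t * g t) (fun t => t) a, cfcₙ_mul (fun t => t) g a, cfcₙ_id' ℝ a]
  rw [dist_eq_norm, ← hcfc]
  refine norm_cfcₙ_lt fun t ht => ?_
  have ht0 : 0 ≤ t := quasispectrum_nonneg_of_nonneg a ha t ht
  rcases lt_or_ge t ε with htε | hεt
  · have hcube : t * (t / ε ^ 2) * t ≤ t := by
      rw [mul_comm t, div_mul_eq_mul_div, div_mul_eq_mul_div, div_le_iff₀ (by positivity)]
      nlinarith [mul_le_mul htε.le htε.le ht0 hε.le]
    simp only [g, max_eq_right htε.le]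
    rw [Real.norm_of_nonneg (by linarith)]
    have : 0 ≤ t * (t / ε ^ 2) * t := by positivity
    linarith
  · have : t * g t * t = t := by
      simp only [g, max_eq_left hεt]
      field_simp
    rw [this, sub_self, norm_zero]
    exact hε

theorem map_mul_her_eq_zero (hD : IsClosed (D : Set E)) (haD : a ∈ D) (ha : 0 ≤ a) {u : E}
    (hu : Commute a u) (huD : ∀ d ∈ D, u * d ∈ D ∧ d * u ∈ D)
    (φ : E →L[ℂ] ℂ) (hφ : ∀ x ∈ her D.toNonUnitalSubalgebra a, 0 ≤ x → 0 ≤ φ x)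
    (hφu : φ (a * u * star u) = 0) {m : E} (hm : m ∈ her D.toNonUnitalSubalgebra a) :
    φ (u * m) = 0 ∧ φ (m * star u) = 0 := by
  have hDu : ∀ d ∈ D, d * star u ∈ D := fun d hd => by
    simpa using star_mem (huD (star d) (star_mem hd)).1
  set r := CFC.sqrt a
  have hr : star r = r := (CFC.sqrt_nonneg a).isSelfAdjoint.star_eq
  have hrr : ∀ z, r * (r * z) = a * z := fun z => by rw [← mul_assoc, CFC.sqrt_mul_sqrt_self a ha]
  have hu' : Commute a (star u) := by simpa [ha.isSelfAdjoint.star_eq] using hu.star_star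
  have hsandwich : ∀ d ∈ D, φ (u * (a * d * a)) = 0 ∧ φ (a * star d * a * star u) = 0 := by
    intro d hd
    have hd' : star d ∈ D := star_mem hd
    have hx : star (r * d * a) = a * star d * r := by
      simp only [star_mul, hr, ha.isSelfAdjoint.star_eq, mul_assoc]
    have hy : star (r * star u) = u * r := by rw [star_mul, star_star, hr]
    have hxx : star (r * d * a) * (r * d * a) = a * (star d * a * d) * a := by
      rw [hx]; simp only [mul_assoc, hrr]
    have hxy : star (r * d * a) * (r * star u) = a * star d * a * star u := by
      rw [hx]; simp only [mul_assoc, hrr]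
    have hyx : star (r * star u) * (r * d * a) = u * (a * d * a) := by
      rw [hy]; simp only [mul_assoc, hrr]
    have hyy : star (r * star u) * (r * star u) = a * u * star u := by
      rw [hy]; simp only [mul_assoc, hrr]
      rw [← mul_assoc, ← hu.eq, mul_assoc]
    have hCS := (φ : E →ₗ[ℂ] ℂ).map_star_mul_eq_zero_of_map_star_mul_self_eq_zero _ hφ
      (hxx ▸ mul_mul_mem_her (mul_mem (mul_mem hd' haD) hd))
      (hxy ▸ mem_her_mul hu' hDu (mul_mul_mem_her hd'))
      (hyx ▸ mul_mem_her hu (fun d hd => (huD d hd).1) (mul_mul_mem_her hd))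
      (hyy ▸ mem_her_mul hu' hDu (mem_her_mul hu (fun d hd => (huD d hd).2)
        (self_mem_her hD haD ha)))
      (hyy ▸ hφu)
    rw [hxy, hyx] at hCS
    exact ⟨hCS.2, hCS.1⟩
  refine her_induction (p := fun m => φ (u * m) = 0 ∧ φ (m * star u) = 0)
    ((isClosed_eq (by fun_prop) continuous_const).inter
      (isClosed_eq (by fun_prop) continuous_const))
    (fun d hd => ⟨(hsandwich d hd).1, by simpa using (hsandwich (star d) (star_mem hd)).2⟩) hm

theorem map_mul_her_eq_character_mul {C : Type*} [CStarAlgebra C] (hD : IsClosed (D : Set E))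
    (haD : a ∈ D) (ha : 0 ≤ a) (ρ : C →⋆ₐ[ℂ] E)
    (hρD : ∀ c, ∀ d ∈ D, ρ c * d ∈ D ∧ d * ρ c ∈ D) (hρa : ∀ c, Commute a (ρ c)) (φ : E →L[ℂ] ℂ)
    (hφ : ∀ x ∈ her D.toNonUnitalSubalgebra a, 0 ≤ x → 0 ≤ φ x) (ω : C →⋆ₐ[ℂ] ℂ)
    (hω : ∀ c, φ (a * ρ c) = φ a * ω c) (c : C) {m : E}
    (hm : m ∈ her D.toNonUnitalSubalgebra a) :
    φ (ρ c * m) = ω c * φ m ∧ φ (m * ρ c) = φ m * ω c := by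
  set c₀ := c - algebraMap ℂ C (ω c)
  have hc₀ : ω c₀ = 0 := by
    rw [map_sub, AlgHomClass.commutes, Algebra.algebraMap_self_apply, sub_self]
  have hρc : ρ c = ρ c₀ + algebraMap ℂ E (ω c) := by
    rw [map_sub, AlgHomClass.commutes, sub_add_cancel]
  have hφ₀ : ∀ c', ω c' = 0 → φ (a * ρ c' * star (ρ c')) = 0 := fun c' hc' => by
    rw [← map_star, mul_assoc, ← map_mul, hω, map_mul, hc', zero_mul, mul_zero]
  have h₁ := (map_mul_her_eq_zero hD haD ha (hρa c₀) (hρD c₀) φ hφ (hφ₀ c₀ hc₀) hm).1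
  have h₂ := (map_mul_her_eq_zero hD haD ha (hρa (star c₀)) (hρD (star c₀)) φ hφ
    (hφ₀ _ (by rw [map_star, hc₀, star_zero])) hm).2
  rw [← map_star, star_star] at h₂
  rw [hρc, add_mul, mul_add, map_add, map_add, h₁, h₂, Algebra.algebraMap_eq_smul_one]
  simp [mul_comm]

end CStarAlgebra

/-- Non-unital multiplicative domain argument.  Let `D` be a C*-algebra (realized as a closed
non-unital star subalgebra of a unital C*-algebra `E`, playing the role of `(A ⊗ C) ⋊_r Γ`),
`a ∈ D` positive, and `C` a unital C*-algebra mapped into the multipliers of `D` by a unital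
*-homomorphism `ρ` whose image commutes with `a`.  Let `φ` be a bounded linear functional
which is positive on `Her(a, D) = closure (a D a)`, and `ω` a character on `C` with
`φ (a ρ(c)) = φ(a) ω(c)` for all `c`.  Then `φ (ρ(c₁) b ρ(c₂)) = ω(c₁) φ(b) ω(c₂)` for all
`c₁, c₂ ∈ C` and all `b ∈ Her(a, D)`. -/
theorem stmt6 {E C : Type*} [CStarAlgebra E] [PartialOrder E] [StarOrderedRing E]
    [CStarAlgebra C]
    (D : NonUnitalStarSubalgebra ℂ E) (hD_closed : IsClosed (D : Set E))
    (a : E) (haD : a ∈ D) (ha : 0 ≤ a)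
    (ρ : C →⋆ₐ[ℂ] E)
    (hρ_mult : ∀ (c : C), ∀ d ∈ D, ρ c * d ∈ D ∧ d * ρ c ∈ D)
    (hρ_comm : ∀ c : C, Commute a (ρ c))
    (φ : E →L[ℂ] ℂ)
    (hφ_pos : ∀ x ∈ closure {x : E | ∃ d ∈ D, x = a * d * a}, 0 ≤ x → 0 ≤ φ x)
    (ω : C →⋆ₐ[ℂ] ℂ)
    (hω : ∀ c : C, φ (a * ρ c) = φ a * ω c) :
    ∀ (c₁ c₂ : C), ∀ b ∈ closure {x : E | ∃ d ∈ D, x = a * d * a},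
      φ (ρ c₁ * b * ρ c₂) = ω c₁ * φ b * ω c₂ := by
  intro c₁ c₂ b hb
  have hher : closure {x : E | ∃ d ∈ D, x = a * d * a} = her D.toNonUnitalSubalgebra a :=
    (coe_her _ _).symm
  rw [hher] at hφ_pos hb
  have hmul := map_mul_her_eq_character_mul hD_closed haD ha ρ hρ_mult hρ_comm φ hφ_pos ω hω
  have hbρ : b * ρ c₂ ∈ her D.toNonUnitalSubalgebra a :=
    mem_her_mul (hρ_comm c₂) (fun d hd => (hρ_mult c₂ d hd).2) hb
  rw [mul_assoc, (hmul c₁ hbρ).1, (hmul c₂ hb).2, mul_assoc]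
end

section
/- Suppose a bounded sequence (v_n) in a C*-algebra A satisfies ‖a − a^{1/2} v_n* v_n a^{1/2}‖_τ → 0 and ‖b − v_n a v_n*‖_τ → 0 for a bounded tracial positive functional τ on A and a, b ∈ A₊. Then for every tracial positive functional ν with ν ≤ τ and every n ∈ ℕ, ν(aᵏ) = ν(bᵏ) for all k ≥ 1. -/
/-!
A positive functional `ν` makes `A` a semi-inner product space (the pre-GNS space) with
`⟪x, y⟫ = ν (x⋆ y)`, and `ν ≤ τ` makes its seminorm `‖x‖₂ = ν (x⋆ x) ^ (1/2)` smaller than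
`‖·‖_τ`. Left multiplication by `u` has `‖·‖₂`-norm at most `‖u‖`; traciality gives
`‖x⋆‖₂ = ‖x‖₂` and hence the same bound for right multiplication. So `x ↦ x ^ (k + 1)` is
`‖·‖₂`-continuous on norm-bounded sets, and since `|ν x| ≤ D ‖x‖₂` (Cauchy–Schwarz against an
approximate unit), `ν (cₙ ^ (k + 1)) → ν (a ^ (k + 1))` and `ν (yₙ ^ (k + 1)) → ν (b ^ (k + 1))`
for `cₙ = a^{1/2} vₙ⋆ vₙ a^{1/2}` and `yₙ = vₙ a vₙ⋆`. Finally `cₙ = q p` and `yₙ = p q` with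
`p = vₙ a^{1/2}`, `q = a^{1/2} vₙ⋆`, and a tracial functional takes the same value on
`(p q) ^ (k + 1)` and `(q p) ^ (k + 1)`.
-/

open scoped ComplexOrder

/-- `nupow a k = a^(k+1)` in a (possibly non-unital) ring. -/
def nupow {A : Type*} [NonUnitalRing A] (a : A) : ℕ → A
  | 0 => a
  | (n + 1) => nupow a n * a

open Filter Topology

lemma norm_nupow_le {A : Type*} [NonUnitalNormedRing A] (x : A) :
    ∀ k, ‖nupow x k‖ ≤ ‖x‖ ^ (k + 1)
  | 0 => by simp [nupow]
  | k + 1 => calc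
      ‖nupow x k * x‖ ≤ ‖nupow x k‖ * ‖x‖ := norm_mul_le _ _
      _ ≤ ‖x‖ ^ (k + 1) * ‖x‖ := by gcongr; exact norm_nupow_le x k
      _ = ‖x‖ ^ (k + 2) := by ring

lemma mul_nupow_mul {A : Type*} [NonUnitalRing A] (p q : A) :
    ∀ k, p * nupow (q * p) k * q = nupow (p * q) (k + 1)
  | 0 => by simp only [nupow, mul_assoc]
  | k + 1 => by
    rw [nupow, nupow, ← mul_nupow_mul p q k]
    simp only [mul_assoc]

lemma apply_nupow_mul_comm {A B : Type*} [NonUnitalRing A] {g : A → B}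
    (hg : ∀ x y, g (x * y) = g (y * x)) (p q : A) :
    ∀ k, g (nupow (p * q) k) = g (nupow (q * p) k)
  | 0 => hg p q
  | k + 1 => by
    rw [← mul_nupow_mul, hg, ← mul_assoc]
    exact hg _ _

lemma map_mul_comm_of_map_star_mul_self {A F : Type*} [NonUnitalRing A] [StarRing A]
    [Module ℂ A] [StarModule ℂ A] [IsScalarTower ℂ A A] [SMulCommClass ℂ A A] [FunLike F A ℂ]
    [LinearMapClass F ℂ A ℂ] {f : F} (hf : ∀ x, f (star x * x) = f (x * star x)) (x y : A) :
    f (x * y) = f (y * x) := by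
  have hadd := hf (star x + y)
  have hadd_I := hf (star x + Complex.I • y)
  -- polarize the trace identity at `star x + y` and `star x + i y`
  simp only [star_add, star_smul, star_star, Complex.star_def, Complex.conj_I, add_mul, mul_add,
    smul_mul_assoc, mul_smul_comm, map_add, map_smul, smul_eq_mul, neg_mul, map_neg,
    neg_smul, mul_neg] at hadd hadd_I
  linear_combination (hadd + hf x - hf y) / 2
    - Complex.I * (hadd_I + hf x + Complex.I * Complex.I * hf y) / 2
    + (f (x * y) - f (star y * star x) - f (y * x) + f (star x * star y)) / 2 * Complex.I_sq

namespace PositiveLinearMap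

variable {A : Type*} [NonUnitalCStarAlgebra A] [PartialOrder A] [StarOrderedRing A]
  (f : A →ₚ[ℂ] ℂ)

lemma norm_toPreGNS_sq (x : A) : ‖f.toPreGNS x‖ ^ 2 = (f (star x * x)).re :=
  Real.sq_sqrt (f.map_nonneg (star_mul_self_nonneg x)).1

lemma norm_toPreGNS_sq_le {x : A} {z : ℂ} (h : f (star x * x) ≤ z) :
    ‖f.toPreGNS x‖ ^ 2 ≤ ‖z‖ :=
  (f.norm_toPreGNS_sq x).trans_le <| (Complex.le_def.mp h).1.trans (Complex.re_le_norm z)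

lemma norm_apply_star_mul_le (x y : A) :
    ‖f (star x * y)‖ ≤ ‖f.toPreGNS x‖ * ‖f.toPreGNS y‖ :=
  norm_inner_le_norm (𝕜 := ℂ) (f.toPreGNS x) (f.toPreGNS y)

lemma norm_toPreGNS_mul_le (u x : A) : ‖f.toPreGNS (u * x)‖ ≤ ‖u‖ * ‖f.toPreGNS x‖ :=
  (f.leftMulMapPreGNS u).le_of_opNorm_le (LinearMap.mkContinuous_norm_le _ (norm_nonneg u) _) _

lemma exists_norm_apply_le_norm_toPreGNS :
    ∃ D ≥ (0 : ℝ), ∀ x, ‖f x‖ ≤ D * ‖f.toPreGNS x‖ := by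
  obtain ⟨C, hC⟩ := f.exists_norm_apply_le
  have hunit := CStarAlgebra.increasingApproximateUnit A
  have : (CStarAlgebra.approximateUnit A).NeBot := hunit.toIsApproximateUnit.neBot
  refine ⟨√C, Real.sqrt_nonneg _, fun x ↦ le_of_tendsto
    ((map_continuous f).continuousAt.tendsto.comp (hunit.tendsto_mul_right x)).norm ?_⟩
  filter_upwards [hunit.eventually_isSelfAdjoint, hunit.eventually_norm] with e hse he
  have hfe : ‖f.toPreGNS e‖ ≤ √C := by
    rw [← Real.sqrt_sq (norm_nonneg _), norm_toPreGNS_sq]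
    gcongr
    calc (f (star e * e)).re ≤ ‖f (star e * e)‖ := Complex.re_le_norm _
      _ ≤ C * ‖star e * e‖ := hC _
      _ ≤ C * 1 := by
        gcongr
        rw [CStarRing.norm_star_mul_self]
        exact mul_le_one₀ he (norm_nonneg e) he
      _ = C := mul_one _
  calc ‖f (e * x)‖ = ‖f (star e * x)‖ := by rw [hse.star_eq]
    _ ≤ ‖f.toPreGNS e‖ * ‖f.toPreGNS x‖ := f.norm_apply_star_mul_le e x
    _ ≤ √C * ‖f.toPreGNS x‖ := by gcongr

variable {f}

lemma norm_toPreGNS_star (hf : ∀ x, f (star x * x) = f (x * star x)) (x : A) :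
    ‖f.toPreGNS (star x)‖ = ‖f.toPreGNS x‖ := by
  rw [← sq_eq_sq₀ (norm_nonneg _) (norm_nonneg _), norm_toPreGNS_sq, norm_toPreGNS_sq, star_star,
    hf x]

lemma norm_toPreGNS_mul_le_right (hf : ∀ x, f (star x * x) = f (x * star x)) (x u : A) :
    ‖f.toPreGNS (x * u)‖ ≤ ‖f.toPreGNS x‖ * ‖u‖ :=
  calc ‖f.toPreGNS (x * u)‖ = ‖f.toPreGNS (star u * star x)‖ := by
        rw [← star_mul, norm_toPreGNS_star hf]
    _ ≤ ‖star u‖ * ‖f.toPreGNS (star x)‖ := f.norm_toPreGNS_mul_le _ _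
    _ = ‖f.toPreGNS x‖ * ‖u‖ := by rw [norm_star, norm_toPreGNS_star hf, mul_comm]

lemma norm_toPreGNS_nupow_sub_le (hf : ∀ x, f (star x * x) = f (x * star x)) {M : ℝ} {x z : A}
    (hx : ‖x‖ ≤ M) (hz : ‖z‖ ≤ M) :
    ∀ k, ‖f.toPreGNS (nupow z k - nupow x k)‖ ≤ (k + 1) * M ^ k * ‖f.toPreGNS (z - x)‖
  | 0 => by simp [nupow]
  | k + 1 => by
    have hsplit : nupow z (k + 1) - nupow x (k + 1) =
        nupow z k * (z - x) + (nupow z k - nupow x k) * x := by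
      simp only [nupow]; noncomm_ring
    have hM : 0 ≤ M := (norm_nonneg x).trans hx
    set ε := ‖f.toPreGNS (z - x)‖
    calc ‖f.toPreGNS (nupow z (k + 1) - nupow x (k + 1))‖
        ≤ ‖f.toPreGNS (nupow z k * (z - x))‖ + ‖f.toPreGNS ((nupow z k - nupow x k) * x)‖ := by
          rw [hsplit, map_add]; exact norm_add_le _ _
      _ ≤ ‖nupow z k‖ * ε + ‖f.toPreGNS (nupow z k - nupow x k)‖ * ‖x‖ :=
          add_le_add (f.norm_toPreGNS_mul_le _ _) (norm_toPreGNS_mul_le_right hf _ _)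
      _ ≤ M ^ (k + 1) * ε + (k + 1) * M ^ k * ε * M := by
          gcongr
          · exact (norm_nupow_le z k).trans (pow_le_pow_left₀ (norm_nonneg z) hz _)
          · exact norm_toPreGNS_nupow_sub_le hf hx hz k
      _ = (↑(k + 1) + 1) * M ^ (k + 1) * ε := by push_cast; ring

lemma tendsto_apply_nupow (hf : ∀ x, f (star x * x) = f (x * star x)) {z : ℕ → A} {x : A}
    (hz : ∃ M, ∀ n, ‖z n‖ ≤ M)
    (h : Tendsto (fun n ↦ ‖f.toPreGNS (x - z n)‖) atTop (𝓝 0)) (k : ℕ) :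
    Tendsto (fun n ↦ f (nupow (z n) k)) atTop (𝓝 (f (nupow x k))) := by
  obtain ⟨M, hM⟩ := hz
  obtain ⟨D, hD0, hD⟩ := f.exists_norm_apply_le_norm_toPreGNS
  rw [tendsto_iff_norm_sub_tendsto_zero]
  refine squeeze_zero (fun _ ↦ norm_nonneg _) (fun n ↦ ?_)
    (by simpa using h.const_mul (D * ((k + 1) * max M ‖x‖ ^ k)))
  calc ‖f (nupow (z n) k) - f (nupow x k)‖ = ‖f (nupow x k - nupow (z n) k)‖ := by
        rw [map_sub, norm_sub_rev]
    _ ≤ D * ‖f.toPreGNS (nupow x k - nupow (z n) k)‖ := hD _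
    _ ≤ D * ((k + 1) * max M ‖x‖ ^ k * ‖f.toPreGNS (x - z n)‖) := by
        gcongr
        exact norm_toPreGNS_nupow_sub_le hf ((hM n).trans (le_max_left _ _)) (le_max_right _ _)
          k
    _ = D * ((k + 1) * max M ‖x‖ ^ k) * ‖f.toPreGNS (x - z n)‖ := by ring

end PositiveLinearMap

theorem stmt19_general {A : Type*} [NonUnitalCStarAlgebra A] [PartialOrder A] [StarOrderedRing A]
    (τ : A →L[ℂ] ℂ)
    (a b : A) (ha : 0 ≤ a)
    (v : ℕ → A) (hv_bdd : ∃ C : ℝ, ∀ n, ‖v n‖ ≤ C)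
    (h1 : Filter.Tendsto
      (fun n => norm (τ (star (a - CFC.sqrt a * (star (v n) * v n) * CFC.sqrt a) *
        (a - CFC.sqrt a * (star (v n) * v n) * CFC.sqrt a))))
      Filter.atTop (nhds 0))
    (h2 : Filter.Tendsto
      (fun n => norm (τ (star (b - v n * a * star (v n)) *
        (b - v n * a * star (v n)))))
      Filter.atTop (nhds 0)) :
    ∀ ν : A →L[ℂ] ℂ, (∀ x : A, 0 ≤ x → 0 ≤ ν x) →
      (∀ x : A, ν (star x * x) = ν (x * star x)) →
      (∀ x : A, 0 ≤ x → ν x ≤ τ x) →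
      ∀ k : ℕ, ν (nupow a k) = ν (nupow b k) := by
  intro ν hν_pos hν_tr hν_le k
  let f : A →ₚ[ℂ] ℂ := .mk₀ ν.toLinearMap hν_pos
  have hconv {x : A} {z : ℕ → A}
      (hτ : Tendsto (fun n ↦ ‖τ (star (x - z n) * (x - z n))‖) atTop (𝓝 0)) :
      Tendsto (fun n ↦ ‖f.toPreGNS (x - z n)‖) atTop (𝓝 0) := by
    simpa using (squeeze_zero (fun _ ↦ sq_nonneg _)
      (fun n ↦ f.norm_toPreGNS_sq_le (hν_le _ (star_mul_self_nonneg _))) hτ).sqrt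
  obtain ⟨C, hC⟩ := hv_bdd
  have hC0 : 0 ≤ C := (norm_nonneg _).trans (hC 0)
  set s := CFC.sqrt a
  have hs : s * s = a := CFC.sqrt_mul_sqrt_self a ha
  have hvav_le (n : ℕ) : ‖v n * a * star (v n)‖ ≤ C * ‖a‖ * C :=
    norm_mul₃_le.trans (by rw [norm_star]; gcongr <;> exact hC n)
  have hsvvs_le (n : ℕ) : ‖s * (star (v n) * v n) * s‖ ≤ ‖s‖ * (C * C) * ‖s‖ :=
    norm_mul₃_le.trans <| by
      gcongr
      exact (norm_mul_le _ _).trans (by rw [norm_star]; gcongr <;> exact hC n)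
  have ha_lim := f.tendsto_apply_nupow hν_tr ⟨_, hsvvs_le⟩ (hconv h1) k
  have hb_lim := f.tendsto_apply_nupow hν_tr ⟨_, hvav_le⟩ (hconv h2) k
  refine tendsto_nhds_unique ha_lim (hb_lim.congr fun n ↦ ?_)
  have hvav : v n * a * star (v n) = (v n * s) * (s * star (v n)) := by
    simp only [← hs, mul_assoc]
  have hsvvs : s * (star (v n) * v n) * s = (s * star (v n)) * (v n * s) := by
    simp only [mul_assoc]
  rw [hvav, hsvvs]
  exact apply_nupow_mul_comm (map_mul_comm_of_map_star_mul_self hν_tr) _ _ k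

/-- Suppose a bounded sequence `(vₙ)` in a C*-algebra `A` satisfies
`‖a − a^{1/2} vₙ* vₙ a^{1/2}‖_τ → 0` and `‖b − vₙ a vₙ*‖_τ → 0` for a bounded tracial
positive functional `τ` and `a, b ∈ A₊`.  Then for every tracial positive functional
`ν ≤ τ` one has `ν(aᵏ) = ν(bᵏ)` for all `k ≥ 1`. -/
theorem stmt19 {A : Type*} [NonUnitalCStarAlgebra A] [PartialOrder A] [StarOrderedRing A]
    (τ : A →L[ℂ] ℂ) (hτ_pos : ∀ x : A, 0 ≤ x → 0 ≤ τ x)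
    (hτ_tracial : ∀ x : A, τ (star x * x) = τ (x * star x))
    (a b : A) (ha : 0 ≤ a) (hb : 0 ≤ b)
    (v : ℕ → A) (hv_bdd : ∃ C : ℝ, ∀ n, ‖v n‖ ≤ C)
    (h1 : Filter.Tendsto
      (fun n => norm (τ (star (a - CFC.sqrt a * (star (v n) * v n) * CFC.sqrt a) *
        (a - CFC.sqrt a * (star (v n) * v n) * CFC.sqrt a))))
      Filter.atTop (nhds 0))
    (h2 : Filter.Tendsto
      (fun n => norm (τ (star (b - v n * a * star (v n)) *
        (b - v n * a * star (v n)))))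
      Filter.atTop (nhds 0)) :
    ∀ ν : A →L[ℂ] ℂ, (∀ x : A, 0 ≤ x → 0 ≤ ν x) →
      (∀ x : A, ν (star x * x) = ν (x * star x)) →
      (∀ x : A, 0 ≤ x → ν x ≤ τ x) →
      ∀ k : ℕ, ν (nupow a k) = ν (nupow b k) :=
  stmt19_general τ a b ha v hv_bdd h1 h2
end
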